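/- Let X, Z : (0,∞) → ℝⁿ solve the high-resolution accelerated mirror descent ODE Ż(t) = −(tσ/2)∇f(X(t)), Ẋ(t) = (2/t)∇φ*(Z(t)) − (2/t)X(t) − √s ∇f(X(t)), with X(0) = x₀, Z(0) = z₀, ∇φ*(z₀) = x₀, Ẋ(0) = 0, where s > 0. Define E(t) = t²σ[f(X(t)) − f(x*)] + 4 D_{φ*}(Z(t), z*). Then for all t > 0, E'(t) ≤ −√s · t²σ ‖∇f(X(t))‖². -/

import Mathlib

/-!
Along the flow, the `∇φ*(Z)` contributions of `t²σ ⟪∇f(X), Ẋ⟫` and of `4 ⟪∇φ*(Z) − ∇φ*(z*), Ż⟫`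
cancel, leaving `E'(t) = 2tσ (f(X) − f(x*) + ⟪∇f(X), x* − X⟫) − √s t²σ ‖∇f(X)‖²`; the bracket is
nonpositive by the first-order characterisation of convexity of `f`.
-/

open Set Filter Topology
open scoped RealInnerProductSpace

noncomputable def fenchelConj {n : ℕ} (φ : EuclideanSpace ℝ (Fin n) → ℝ)
    (z : EuclideanSpace ℝ (Fin n)) : ℝ :=
  ⨆ x : EuclideanSpace ℝ (Fin n), (⟪z, x⟫ - φ x)

section

variable {E : Type*} [NormedAddCommGroup E] [InnerProductSpace ℝ E] [CompleteSpace E]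

theorem HasGradientAt.comp_hasDerivAt {g : E → ℝ} {a : E} {Y : ℝ → E} {y' : E} {t : ℝ}
    (hg : HasGradientAt g a (Y t)) (hY : HasDerivAt Y y' t) :
    HasDerivAt (fun u => g (Y u)) ⟪a, y'⟫ t := by
  have h := (hasGradientAt_iff_hasFDerivAt.mp hg).comp_hasDerivAt t hY
  simp only [InnerProductSpace.toDual_apply_apply] at h
  -- `h` reaches `ℝ`'s additive structure through `NormedAddCommGroup`; only defeq closes the gap
  exact h

theorem ConvexOn.add_inner_gradient_le {f : E → ℝ} {s : Set E} {a x y : E}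
    (hf : ConvexOn ℝ s f) (hx : x ∈ s) (hy : y ∈ s) (ha : HasGradientAt f a x) :
    f x + ⟪a, y - x⟫ ≤ f y := by
  let line : ℝ →ᵃ[ℝ] E := AffineMap.lineMap x y
  have hderiv : HasDerivAt (f ∘ line) ⟪a, y - x⟫ 0 :=
    HasGradientAt.comp_hasDerivAt (by simpa [line] using ha) AffineMap.hasDerivAt_lineMap
  have hslope := (hf.comp_affineMap line).le_slope_of_hasDerivAt
    (by simpa [line] using hx) (by simpa [line] using hy) zero_lt_one hderiv
  simp only [slope_def_field, Function.comp_apply, AffineMap.lineMap_apply_one,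
    AffineMap.lineMap_apply_zero, sub_zero, div_one, line] at hslope
  linarith

def bregmanDiv (ψ : E → ℝ) (ψ' : E → E) (y x : E) : ℝ :=
  ψ y - ψ x - ⟪ψ' x, y - x⟫

theorem hasDerivAt_bregmanDiv_comp {ψ : E → ℝ} {ψ' : E → E} {Z : ℝ → E} {z' x : E} {t : ℝ}
    (hψ : HasGradientAt ψ (ψ' (Z t)) (Z t)) (hZ : HasDerivAt Z z' t) :
    HasDerivAt (fun u => bregmanDiv ψ ψ' (Z u) x) ⟪ψ' (Z t) - ψ' x, z'⟫ t := by
  have hlin : HasDerivAt (fun u => ⟪ψ' x, Z u - x⟫) ⟪ψ' x, z'⟫ t := by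
    have h := (innerSL ℝ (ψ' x)).hasFDerivAt.comp_hasDerivAt t (hZ.sub_const x)
    simp only [innerSL_apply_apply] at h
    exact h
  rw [inner_sub_left]
  exact ((hψ.comp_hasDerivAt hZ).sub_const (ψ x)).sub hlin

theorem hasDerivAt_lyapunov_of_mirrorFlow {f ψ : E → ℝ} {f' ψ' : E → E} {X Z : ℝ → E}
    {x' z' zs : E} {σ r c t : ℝ} (ht : t ≠ 0)
    (hf : HasGradientAt f (f' (X t)) (X t)) (hψ : HasGradientAt ψ (ψ' (Z t)) (Z t))
    (hX : HasDerivAt X x' t) (hZ : HasDerivAt Z z' t)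
    (hz' : z' = -((t * σ) / 2) • f' (X t))
    (hx' : x' = (2 / t) • ψ' (Z t) - (2 / t) • X t - r • f' (X t)) :
    HasDerivAt (fun u => u ^ 2 * σ * (f (X u) - c) + 4 * bregmanDiv ψ ψ' (Z u) zs)
      (2 * t * σ * (f (X t) - c + ⟪f' (X t), ψ' zs - X t⟫) - r * t ^ 2 * σ * ‖f' (X t)‖ ^ 2)
      t := by
  have hweight : HasDerivAt (fun u : ℝ => u ^ 2 * σ) (2 * t * σ) t := by
    simpa using (hasDerivAt_pow 2 t).mul_const σ
  have hE := (hweight.mul ((hf.comp_hasDerivAt hX).sub_const c)).add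
    ((hasDerivAt_bregmanDiv_comp (x := zs) hψ hZ).const_mul 4)
  refine hE.congr_deriv ?_
  subst hz' hx'
  simp only [inner_sub_left, inner_sub_right, real_inner_smul_right,
    real_inner_self_eq_norm_sq, real_inner_comm (f' (X t))]
  field_simp
  ring

end

theorem accelerated_mirror_flow_lyapunov_deriv_general
{n : ℕ} (f φ : EuclideanSpace ℝ (Fin n) → ℝ)
    (f' gφs : EuclideanSpace ℝ (Fin n) → EuclideanSpace ℝ (Fin n))
    (σ s : ℝ) (hσ : 0 < σ)
    -- f is convex and differentiable with L-Lipschitz gradient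
    (hfconv : ConvexOn ℝ Set.univ f)
    (hfd : ∀ x, HasGradientAt f (f' x) x)
    -- φ* is differentiable with gradient gφs
    (hgφs : ∀ z, HasGradientAt (fenchelConj φ) (gφs z) z)
    -- the solution of the high-resolution accelerated mirror descent ODE
    (X Z X' Z' : ℝ → EuclideanSpace ℝ (Fin n))
    (xs zs : EuclideanSpace ℝ (Fin n))
    (hX : ∀ t, 0 < t → HasDerivAt X (X' t) t)
    (hZ : ∀ t, 0 < t → HasDerivAt Z (Z' t) t)
    (hflow₁ : ∀ t, 0 < t → Z' t = -((t * σ) / 2) • f' (X t))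
    (hflow₂ : ∀ t, 0 < t →
      X' t = (2 / t) • gφs (Z t) - (2 / t) • X t - Real.sqrt s • f' (X t))
    -- x* is a global minimizer of f and ∇φ*(z*) = x*
    (hzs : gφs zs = xs) :
    ∀ t, 0 < t →
      deriv (fun u => u ^ 2 * σ * (f (X u) - f xs) +
          4 * (fenchelConj φ (Z u) - fenchelConj φ zs - ⟪gφs zs, Z u - zs⟫)) t
        ≤ -(Real.sqrt s * t ^ 2 * σ) * ‖f' (X t)‖ ^ 2 := by
  intro t ht
  have hE := hasDerivAt_lyapunov_of_mirrorFlow (c := f xs) (zs := zs) ht.ne' (hfd (X t))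
    (hgφs (Z t)) (hX t ht) (hZ t ht) (hflow₁ t ht) (hflow₂ t ht)
  have hconv := hfconv.add_inner_gradient_le (mem_univ (X t)) (mem_univ xs) (hfd (X t))
  change deriv (fun u => _ + 4 * bregmanDiv (fenchelConj φ) gφs (Z u) zs) t ≤ _
  rw [hE.deriv, hzs]
  have hgap : f (X t) - f xs + ⟪f' (X t), xs - X t⟫ ≤ 0 := by linarith
  linarith [mul_nonpos_of_nonneg_of_nonpos (by positivity : 0 ≤ 2 * t * σ) hgap]

/-- Along the high-resolution accelerated mirror descent ODE, the Lyapunov function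
`E(t) = t²σ[f(X(t)) − f(x*)] + 4D_{φ*}(Z(t), z*)` satisfies
`E'(t) ≤ −√s·t²σ‖∇f(X(t))‖²` for all `t > 0`. -/
theorem accelerated_mirror_flow_lyapunov_deriv
{n : ℕ} (f φ : EuclideanSpace ℝ (Fin n) → ℝ)
    (f' gφs : EuclideanSpace ℝ (Fin n) → EuclideanSpace ℝ (Fin n))
    (σ L s : ℝ) (hσ : 0 < σ) (hs : 0 < s)
    -- f is convex and differentiable with L-Lipschitz gradient
    (hfconv : ConvexOn ℝ Set.univ f)
    (hfd : ∀ x, HasGradientAt f (f' x) x)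
    (hfL : ∀ x y, ‖f' x - f' y‖ ≤ L * ‖x - y‖)
    -- φ is σ-strongly convex
    (hφsc : StrongConvexOn Set.univ σ φ)
    -- φ* is differentiable with gradient gφs
    (hgφs : ∀ z, HasGradientAt (fenchelConj φ) (gφs z) z)
    -- the solution of the high-resolution accelerated mirror descent ODE
    (X Z X' Z' : ℝ → EuclideanSpace ℝ (Fin n))
    (x₀ z₀ xs zs : EuclideanSpace ℝ (Fin n))
    (hX : ∀ t, 0 < t → HasDerivAt X (X' t) t)
    (hZ : ∀ t, 0 < t → HasDerivAt Z (Z' t) t)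
    (hflow₁ : ∀ t, 0 < t → Z' t = -((t * σ) / 2) • f' (X t))
    (hflow₂ : ∀ t, 0 < t →
      X' t = (2 / t) • gφs (Z t) - (2 / t) • X t - Real.sqrt s • f' (X t))
    (hX0 : X 0 = x₀) (hZ0 : Z 0 = z₀) (hx₀ : gφs z₀ = x₀) (hX'0 : X' 0 = 0)
    -- x* is a global minimizer of f and ∇φ*(z*) = x*
    (hxs : ∀ w, f xs ≤ f w) (hzs : gφs zs = xs) :
    ∀ t, 0 < t →
      deriv (fun u => u ^ 2 * σ * (f (X u) - f xs) +
          4 * (fenchelConj φ (Z u) - fenchelConj φ zs - ⟪gφs zs, Z u - zs⟫)) t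
        ≤ -(Real.sqrt s * t ^ 2 * σ) * ‖f' (X t)‖ ^ 2 :=
  accelerated_mirror_flow_lyapunov_deriv_general f φ f' gφs σ s hσ hfconv hfd hgφs X Z X' Z' xs zs
    hX hZ hflow₁ hflow₂ hzs
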